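/- arXiv:1102.2849 — 4 statements merged into one kernel-verified Lean document; each statement's English description precedes it below -/
import Mathlib

section
/- Let k ∈ ℕ and let ψ : [0,∞)^k → ℝ be bounded and continuous. Then for every t > 0, the simplex Riemann sums (1/n^k) Σ_{0 ≤ r₁ < r₂ < ⋯ < r_k ≤ ⌊nt⌋−1} ψ(r₁/n, …, r_k/n) converge, as n → ∞, to the iterated simplex integral ∫₀^t ds_k ∫₀^{s_k} ds_{k−1} ⋯ ∫₀^{s₂} ds₁ ψ(s₁,…,s_k). -/
open MeasureTheory Filter Topology

/-!
The Riemann sum is the integral of the step function equal to `ψ (r / n)` on the grid cell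
`∏ᵢ [rᵢ / n, (rᵢ + 1) / n)` of every strictly increasing `r` with entries below `⌊n t⌋`.
These step functions vanish outside `[0, t]ᵏ`, on which `ψ` is bounded, and at every `s` off the
hyperplanes `sᵢ = 0` they converge to `ψ s` times the indicator of the open simplex: inside it,
the strict inequalities between `0`, the `sᵢ` and `t` pass to the indices `⌊n sᵢ⌋` once `n` is
large, and outside it no cell containing `s` is ever counted, because `x ↦ ⌊n x⌋` is monotone.
Dominated convergence concludes.
-/

lemma mem_Ico_div_iff_floor_eq {n r : ℕ} (hn : 0 < n) (x : ℝ) :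
    x ∈ Set.Ico ((r : ℝ) / n) ((r + 1) / n) ↔ 0 ≤ x ∧ ⌊n * x⌋₊ = r := by
  have hn' : (0 : ℝ) < n := by exact_mod_cast hn
  rw [Set.mem_Ico, div_le_iff₀ hn', lt_div_iff₀ hn', mul_comm x]
  constructor
  · rintro ⟨h1, h2⟩
    have hx : 0 ≤ x := nonneg_of_mul_nonneg_right ((Nat.cast_nonneg r).trans h1) hn'
    exact ⟨hx, (Nat.floor_eq_iff (by positivity)).2 ⟨h1, h2⟩⟩
  · rintro ⟨hx, rfl⟩
    exact (Nat.floor_eq_iff (by positivity)).1 rfl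

lemma eventually_floor_mul_lt_floor_mul {a b : ℝ} (ha : 0 ≤ a) (hab : a < b) :
    ∀ᶠ n : ℕ in atTop, ⌊n * a⌋₊ < ⌊n * b⌋₊ := by
  have hgap := tendsto_natCast_atTop_atTop.atTop_mul_const (sub_pos.2 hab)
  filter_upwards [hgap.eventually_ge_atTop 1] with n hn
  rw [Nat.lt_iff_add_one_le, Nat.le_floor_iff' (Nat.succ_ne_zero _)]
  push_cast
  linarith [Nat.floor_le (mul_nonneg n.cast_nonneg ha)]

section Grid

variable {ι : Type*}

noncomputable def gridIndex (n : ℕ) (s : ι → ℝ) : ι → ℕ := fun i => ⌊n * s i⌋₊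

noncomputable def gridCell (n : ℕ) (r : ι → ℕ) : Set (ι → ℝ) :=
  Set.univ.pi fun i => Set.Ico ((r i : ℝ) / n) ((r i + 1) / n)

lemma mem_gridCell_iff {n : ℕ} (hn : 0 < n) {r : ι → ℕ} {s : ι → ℝ} :
    s ∈ gridCell n r ↔ (∀ i, 0 ≤ s i) ∧ gridIndex n s = r := by
  simp only [gridCell, Set.mem_univ_pi, mem_Ico_div_iff_floor_eq hn, forall_and, funext_iff,
    gridIndex]

lemma measurableSet_gridCell [Countable ι] (n : ℕ) (r : ι → ℕ) : MeasurableSet (gridCell n r) :=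
  MeasurableSet.univ_pi fun _ => measurableSet_Ico

lemma left_mem_gridCell {n : ℕ} (hn : 0 < n) (r : ι → ℕ) :
    (fun i => (r i : ℝ) / n) ∈ gridCell n r :=
  (mem_gridCell_iff hn).2 ⟨fun i => by positivity, funext fun i => by
    simp [gridIndex, mul_div_cancel₀ _ (n.cast_ne_zero.2 hn.ne' : (n : ℝ) ≠ 0)]⟩

lemma gridCell_subset_Icc {n : ℕ} (hn : 0 < n) {r : ι → ℕ} {R : ℝ}
    (hr : ∀ i, (r i + 1 : ℝ) ≤ n * R) : gridCell n r ⊆ Set.Icc 0 fun _ => R := by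
  have hn' : (0 : ℝ) < n := by exact_mod_cast hn
  intro s hs
  refine ⟨fun i => (((mem_gridCell_iff hn).1 hs).1 i), fun i => ?_⟩
  have := (hs i (Set.mem_univ i)).2
  rw [lt_div_iff₀ hn'] at this
  nlinarith [hr i]

lemma volume_gridCell [Fintype ι] (n : ℕ) (r : ι → ℕ) :
    volume (gridCell n r) = ENNReal.ofReal (1 / n) ^ Fintype.card ι := by
  simp [gridCell, volume_pi_pi, Real.volume_Ico, add_div]

lemma volume_real_gridCell [Fintype ι] (n : ℕ) (r : ι → ℕ) :
    volume.real (gridCell n r) = (1 / n : ℝ) ^ Fintype.card ι := by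
  simp [measureReal_def, volume_gridCell]

lemma integrable_indicator_gridCell [Fintype ι] (n : ℕ) (r : ι → ℕ) (c : ℝ) :
    Integrable ((gridCell n r).indicator fun _ => c) := by
  refine (integrable_indicator_iff (measurableSet_gridCell n r)).2 (integrableOn_const ?_)
  simp [volume_gridCell]

lemma sum_indicator_gridCell {n : ℕ} (hn : 0 < n) (S : Finset (ι → ℕ)) (g : (ι → ℕ) → ℝ)
    (s : ι → ℝ) :
    ∑ r ∈ S, (gridCell n r).indicator (fun _ => g r) s =
      {s | (∀ i, 0 ≤ s i) ∧ gridIndex n s ∈ S}.indicator (fun s => g (gridIndex n s)) s := by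
  classical
  simp_rw [Set.indicator_apply, Set.mem_ofPred_eq, mem_gridCell_iff hn]
  by_cases hs : ∀ i, 0 ≤ s i <;> simp [hs, Finset.sum_ite_eq]

lemma integral_sum_indicator_gridCell [Fintype ι] (n : ℕ) (S : Finset (ι → ℕ))
    (g : (ι → ℕ) → ℝ) :
    ∫ s, ∑ r ∈ S, (gridCell n r).indicator (fun _ => g r) s =
      (1 / n : ℝ) ^ Fintype.card ι * ∑ r ∈ S, g r := by
  rw [integral_finsetSum _ fun r _ => integrable_indicator_gridCell n r (g r), Finset.mul_sum]
  refine Finset.sum_congr rfl fun r _ => ?_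
  rw [integral_indicator_const _ (measurableSet_gridCell n r), volume_real_gridCell, smul_eq_mul]

lemma tendsto_gridIndex_div {s : ι → ℝ} (hs : ∀ i, 0 ≤ s i) :
    Tendsto (fun n : ℕ => fun i => (gridIndex n s i : ℝ) / n) atTop (𝓝 s) :=
  tendsto_pi_nhds.2 fun i => by
    simpa [gridIndex, Function.comp_def, mul_comm] using
      (tendsto_nat_floor_mul_div_atTop (hs i)).comp tendsto_natCast_atTop_atTop

theorem tendsto_gridRiemannSum_setIntegral [Fintype ι] {f : (ι → ℝ) → ℝ} (hf : Continuous f)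
    {S : ℕ → Finset (ι → ℕ)} {A : Set (ι → ℝ)} (hA : MeasurableSet A) {R : ℝ}
    (hS : ∀ n, ∀ r ∈ S n, ∀ i, (r i + 1 : ℝ) ≤ n * R)
    (hSA : ∀ᵐ s, ∀ᶠ n in atTop, ((∀ i, 0 ≤ s i) ∧ gridIndex n s ∈ S n) ↔ s ∈ A) :
    Tendsto (fun n : ℕ => (1 / n : ℝ) ^ Fintype.card ι * ∑ r ∈ S n, f fun i => r i / n) atTop
      (𝓝 (∫ s in A, f s)) := by
  set F : ℕ → (ι → ℝ) → ℝ :=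
    fun n s => ∑ r ∈ S n, (gridCell n r).indicator (fun _ => f fun i => r i / n) s
  set box : Set (ι → ℝ) := Set.Icc 0 fun _ => R
  obtain ⟨M, hM⟩ := isCompact_Icc.exists_bound_of_continuousOn (hf.continuousOn (s := box))
  have hF_int (n : ℕ) : Integrable (F n) :=
    integrable_finsetSum _ fun r _ => integrable_indicator_gridCell n r _
  have hF_bound (n : ℕ) (hn : 0 < n) (s : ι → ℝ) : ‖F n s‖ ≤ box.indicator (fun _ => M) s := by
    dsimp only [F]
    rw [sum_indicator_gridCell hn]
    by_cases hs : s ∈ {s | (∀ i, 0 ≤ s i) ∧ gridIndex n s ∈ S n}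
    · have hcell := gridCell_subset_Icc hn (hS n _ hs.2)
      rw [Set.indicator_of_mem hs,
        Set.indicator_of_mem (hcell ((mem_gridCell_iff hn).2 ⟨hs.1, rfl⟩))]
      exact hM _ (hcell (left_mem_gridCell hn _))
    · rw [Set.indicator_of_notMem hs, norm_zero]
      exact Set.indicator_nonneg (fun x hx => (norm_nonneg _).trans (hM x hx)) s
  have hF_lim : ∀ᵐ s, Tendsto (fun n => F n s) atTop (𝓝 (A.indicator f s)) := by
    filter_upwards [hSA] with s hs
    have hF_eq :
        ∀ᶠ n in atTop, F n s = A.indicator (fun s => f fun i => gridIndex n s i / n) s := by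
      filter_upwards [hs, eventually_gt_atTop 0] with n hn hn0
      dsimp only [F]
      rw [sum_indicator_gridCell hn0]
      exact Set.indicator_eq_indicator hn rfl
    refine Tendsto.congr' (EventuallyEq.symm hF_eq) ?_
    by_cases hsA : s ∈ A
    · obtain ⟨n, hn⟩ := hs.exists
      simp only [Set.indicator_of_mem hsA]
      exact (hf.tendsto s).comp (tendsto_gridIndex_div (hn.2 hsA).1)
    · simp only [Set.indicator_of_notMem hsA, tendsto_const_nhds]
  rw [← integral_indicator hA]
  refine (tendsto_integral_filter_of_dominated_convergence _
    (Eventually.of_forall fun n => (hF_int n).aestronglyMeasurable)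
    ((eventually_gt_atTop 0).mono fun n hn => Eventually.of_forall (hF_bound n hn))
    ((integrable_indicator_iff measurableSet_Icc).2
      (integrableOn_const isCompact_Icc.measure_lt_top.ne))
    hF_lim).congr fun n => integral_sum_indicator_gridCell n (S n) _

end Grid

def orderedSimplex (k : ℕ) (t : ℝ) : Set (Fin k → ℝ) :=
  {s | StrictMono s ∧ ∀ i, s i ∈ Set.Ioo 0 t}

def simplexGrid (k m : ℕ) : Finset (Fin k → ℕ) :=
  (Finset.univ.filter fun r : Fin k → Fin m => ∀ i j : Fin k, i < j → r i < r j).map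
    (Function.Embedding.piCongrRight fun _ => Fin.valEmbedding)

section Simplex

variable {k : ℕ} {t : ℝ}

lemma isOpen_orderedSimplex : IsOpen (orderedSimplex k t) := by
  simp only [orderedSimplex, StrictMono, Set.mem_Ioo, Set.ofPred_and, Set.ofPred_forall]
  exact (isOpen_iInter_of_finite fun i => isOpen_iInter_of_finite fun j =>
      isOpen_iInter_of_finite fun _ => isOpen_lt (continuous_apply i) (continuous_apply j)).inter
    (isOpen_iInter_of_finite fun i =>
      (isOpen_lt continuous_const (continuous_apply i)).inter
        (isOpen_lt (continuous_apply i) continuous_const))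

lemma mem_simplexGrid {m : ℕ} {r : Fin k → ℕ} :
    r ∈ simplexGrid k m ↔ StrictMono r ∧ ∀ i, r i < m := by
  simp only [simplexGrid, Finset.mem_map, Finset.mem_filter, Finset.mem_univ, true_and]
  constructor
  · rintro ⟨a, ha, rfl⟩
    exact ⟨fun i j hij => ha i j hij, fun i => (a i).isLt⟩
  · rintro ⟨hr, hlt⟩
    exact ⟨fun i => ⟨r i, hlt i⟩, fun i j hij => hr hij, rfl⟩

lemma natCast_add_one_le_of_mem_simplexGrid {n : ℕ} {r : Fin k → ℕ}
    (hr : r ∈ simplexGrid k ⌊n * t⌋₊) (i : Fin k) : (r i + 1 : ℝ) ≤ n * t := by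
  exact_mod_cast (Nat.le_floor_iff' (Nat.succ_ne_zero (r i))).1 ((mem_simplexGrid.1 hr).2 i)

lemma eventually_gridIndex_mem_simplexGrid {s : Fin k → ℝ} (hs : s ∈ orderedSimplex k t) :
    ∀ᶠ n : ℕ in atTop, gridIndex n s ∈ simplexGrid k ⌊n * t⌋₊ := by
  simp only [mem_simplexGrid, eventually_and, StrictMono]
  exact ⟨eventually_all.2 fun i => eventually_all.2 fun j => eventually_imp_distrib_left.2
      fun hij => eventually_floor_mul_lt_floor_mul (hs.2 i).1.le (hs.1 hij),
    eventually_all.2 fun i => eventually_floor_mul_lt_floor_mul (hs.2 i).1.le (hs.2 i).2⟩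

lemma mem_orderedSimplex_of_gridIndex_mem {n : ℕ} {s : Fin k → ℝ} (hs : ∀ i, 0 < s i)
    (h : gridIndex n s ∈ simplexGrid k ⌊n * t⌋₊) : s ∈ orderedSimplex k t := by
  have hmono : Monotone fun x : ℝ => ⌊n * x⌋₊ := fun a b hab =>
    Nat.floor_mono (mul_le_mul_of_nonneg_left hab n.cast_nonneg)
  rw [mem_simplexGrid] at h
  exact ⟨fun i j hij => hmono.reflect_lt (h.1 hij), fun i => ⟨hs i, hmono.reflect_lt (h.2 i)⟩⟩

lemma eventually_mem_simplexGrid_iff {s : Fin k → ℝ} (hs : ∀ i, s i ≠ 0) :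
    ∀ᶠ n : ℕ in atTop, ((∀ i, 0 ≤ s i) ∧ gridIndex n s ∈ simplexGrid k ⌊n * t⌋₊) ↔
      s ∈ orderedSimplex k t := by
  by_cases hA : s ∈ orderedSimplex k t
  · filter_upwards [eventually_gridIndex_mem_simplexGrid hA] with n hn
    exact iff_of_true ⟨fun i => (hA.2 i).1.le, hn⟩ hA
  · exact Eventually.of_forall fun n => iff_of_false (fun h => hA
      (mem_orderedSimplex_of_gridIndex_mem (fun i => (h.1 i).lt_of_ne' (hs i)) h.2)) hA

end Simplex

theorem simplex_riemann_sum_tendsto_general (k : ℕ)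
    (ψ : (Fin k → NNReal) → ℝ)
    (hcont : Continuous ψ)
    (t : ℝ) :
    Tendsto (fun n : ℕ =>
        (1 / (n : ℝ) ^ k) *
          ∑ r ∈ Finset.univ.filter
              (fun r : Fin k → Fin (⌊(n : ℝ) * t⌋₊) => ∀ i j : Fin k, i < j → r i < r j),
            ψ (fun i => Real.toNNReal (((r i : ℕ) : ℝ) / n)))
      atTop
      (𝓝 (∫ s in {s : Fin k → ℝ | (∀ i j : Fin k, i < j → s i < s j) ∧
            ∀ i, s i ∈ Set.Ioo 0 t}, ψ (fun i => Real.toNNReal (s i)))) := by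
  have hae : ∀ᵐ s : Fin k → ℝ, ∀ i, s i ≠ 0 :=
    ae_all_iff.2 fun i => Measure.ae_eval_ne (fun _ => volume) i 0
  refine (tendsto_gridRiemannSum_setIntegral (by fun_prop) isOpen_orderedSimplex.measurableSet
    (fun n r hr => natCast_add_one_le_of_mem_simplexGrid hr)
    (hae.mono fun s hs => eventually_mem_simplexGrid_iff hs)).congr fun n => ?_
  rw [Fintype.card_fin, one_div_pow, simplexGrid, Finset.sum_map]
  rfl

/-- For a bounded continuous `ψ : [0,∞)^k → ℝ` and `t > 0`, the simplex
Riemann sums `(1/n^k) Σ_{0 ≤ r₁ < ⋯ < r_k ≤ ⌊nt⌋-1} ψ(r/n)` converge to the Lebesgue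
integral of `ψ` over the ordered simplex `{0 < s₁ < ⋯ < s_k < t}`. -/
theorem simplex_riemann_sum_tendsto (k : ℕ) (hk : 1 ≤ k)
    (ψ : (Fin k → NNReal) → ℝ)
    (hcont : Continuous ψ)
    (C : ℝ) (hbdd : ∀ s, |ψ s| ≤ C)
    (t : ℝ) (ht : 0 < t) :
    Tendsto (fun n : ℕ =>
        (1 / (n : ℝ) ^ k) *
          ∑ r ∈ Finset.univ.filter
              (fun r : Fin k → Fin (⌊(n : ℝ) * t⌋₊) => ∀ i j : Fin k, i < j → r i < r j),
            ψ (fun i => Real.toNNReal (((r i : ℕ) : ℝ) / n)))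
      atTop
      (𝓝 (∫ s in {s : Fin k → ℝ | (∀ i j : Fin k, i < j → s i < s j) ∧
            ∀ i, s i ∈ Set.Ioo 0 t}, ψ (fun i => Real.toNNReal (s i)))) :=
  simplex_riemann_sum_tendsto_general k ψ hcont t
end

section
/- Let d ∈ {1,2,3} and T > 0. Then the iterated integral ∫₀^T dt₃ ∫₀^{t₃} dt₂ ∫₀^{t₂} dt₁ ∫_{t₂}^{t₃} ds₃ ∫_{t₁}^{t₂} ds₂ ∫₀^{t₁} ds₁ (t₂ − s₁)^{−d/2} (s₃ − s₂)^{−d/2} is finite. -/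
/-!
Both singular factors are tamed by `x ^ (-d/2) ≤ x ^ (-3/2) + 1` for `d ≤ 3` and
`∫_u^∞ x ^ (-3/2) dx = 2 u ^ (-1/2)`. On the domain the singularities `s₁ = t₂` and `s₂ = s₃`
lie beyond the right ends `t₁ < t₂` and `t₂ < s₃` of the `s₁`- and `s₂`-intervals, so these
integrals are at most `2 (t₂ - t₁) ^ (-1/2) + T` and `2 (s₃ - t₂) ^ (-1/2) + T`. Square-root
singularities are integrable, uniformly in `t₂ ≤ t₃ ≤ T`, which bounds the `t₁`- and
`s₃`-integrals, and the remaining `t₂`- and `t₃`-integrals run over intervals of length at most `T`.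
-/

open MeasureTheory Set
open scoped ENNReal

theorem Real.rpow_le_rpow_add_one {x p q : ℝ} (hx : 0 < x) (hqp : q ≤ p) (hp : p ≤ 0) :
    x ^ p ≤ x ^ q + 1 := by
  rcases le_or_gt x 1 with hx₁ | hx₁
  · linarith [Real.rpow_le_rpow_of_exponent_ge hx hx₁ hqp]
  · linarith [Real.rpow_le_one_of_one_le_of_nonpos hx₁.le hp, Real.rpow_nonneg hx.le q]

theorem setLIntegral_Ioc_le_mul {f : ℝ → ℝ≥0∞} {a b : ℝ} {C : ℝ≥0∞}
    (hf : ∀ x ∈ Ioc a b, f x ≤ C) : ∫⁻ x in Ioc a b, f x ≤ C * ENNReal.ofReal (b - a) := by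
  simpa only [setLIntegral_const, Real.volume_Ioc] using
    setLIntegral_mono' (μ := volume) measurableSet_Ioc hf

theorem setLIntegral_Ioc_ofReal_eq_intervalIntegral {f : ℝ → ℝ} {a b : ℝ} (hab : a ≤ b)
    (hf : IntervalIntegrable f volume a b) (hf₀ : ∀ x ∈ Ioc a b, 0 ≤ f x) :
    ∫⁻ x in Ioc a b, ENNReal.ofReal (f x) = ENNReal.ofReal (∫ x in a..b, f x) := by
  rw [intervalIntegral.integral_of_le hab, ofReal_integral_eq_lintegral_ofReal
    ((intervalIntegrable_iff_integrableOn_Ioc_of_le hab).mp hf)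
    ((ae_restrict_iff' measurableSet_Ioc).mpr (Filter.Eventually.of_forall hf₀))]

theorem setLIntegral_Ioc_rpow_sub_left {a b c r : ℝ} (hab : a ≤ b) (hbc : b ≤ c)
    (hr : -1 < r ∨ r ≠ -1 ∧ b < c) :
    ∫⁻ x in Ioc a b, ENNReal.ofReal ((c - x) ^ r) =
      ENNReal.ofReal (((c - a) ^ (r + 1) - (c - b) ^ (r + 1)) / (r + 1)) := by
  have h0 : -1 < r ∨ r ≠ -1 ∧ (0 : ℝ) ∉ uIcc (c - b) (c - a) := by
    refine hr.imp_right fun ⟨hr, hbc⟩ ↦ ⟨hr, fun h ↦ ?_⟩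
    rw [uIcc_of_le (by linarith)] at h
    linarith [h.1]
  have hint : IntervalIntegrable (fun x ↦ x ^ r) volume (c - b) (c - a) := by
    rcases h0 with h0 | ⟨-, h0⟩
    · exact intervalIntegral.intervalIntegrable_rpow' h0
    · exact intervalIntegral.intervalIntegrable_rpow (Or.inr h0)
  rw [setLIntegral_Ioc_ofReal_eq_intervalIntegral hab, intervalIntegral.integral_comp_sub_left
    (fun x ↦ x ^ r), integral_rpow h0]
  · simpa using (hint.comp_sub_left c).symm
  · exact fun x hx ↦ Real.rpow_nonneg (by linarith [hx.2]) r

theorem setLIntegral_Ioc_rpow_sub_right {a b r : ℝ} (hab : a ≤ b) (hr : -1 < r) :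
    ∫⁻ x in Ioc a b, ENNReal.ofReal ((x - a) ^ r) =
      ENNReal.ofReal ((b - a) ^ (r + 1) / (r + 1)) := by
  rw [setLIntegral_Ioc_ofReal_eq_intervalIntegral hab, intervalIntegral.integral_comp_sub_right
    (fun x ↦ x ^ r), sub_self, integral_rpow (Or.inl hr), Real.zero_rpow (by linarith), sub_zero]
  · simpa using
      (intervalIntegral.intervalIntegrable_rpow' hr (a := 0) (b := b - a)).comp_sub_right a
  · exact fun x hx ↦ Real.rpow_nonneg (by linarith [hx.1]) r

noncomputable def singularBound (T u : ℝ) : ℝ≥0∞ :=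
  2 * ENNReal.ofReal (u ^ (-(1 / 2) : ℝ)) + ENNReal.ofReal T

theorem singularBound_ne_top (T u : ℝ) : singularBound T u ≠ ⊤ := by
  unfold singularBound; finiteness

noncomputable def singularBoundMass (T : ℝ) : ℝ≥0∞ :=
  4 * ENNReal.ofReal (T ^ (1 / 2 : ℝ)) + ENNReal.ofReal T * ENNReal.ofReal T

theorem singularBoundMass_ne_top (T : ℝ) : singularBoundMass T ≠ ⊤ := by
  unfold singularBoundMass; finiteness

theorem setLIntegral_Ioc_rpow_sub_left_le_singularBound {a b c p T : ℝ} (hab : a ≤ b)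
    (hbc : b < c) (hbaT : b - a ≤ T) (hp : -(3 / 2) ≤ p) (hp₀ : p ≤ 0) :
    ∫⁻ x in Ioc a b, ENNReal.ofReal ((c - x) ^ p) ≤ singularBound T (c - b) := by
  have hpow : ∀ x ∈ Ioc a b,
      ENNReal.ofReal ((c - x) ^ p) ≤ ENNReal.ofReal ((c - x) ^ (-(3 / 2) : ℝ)) + 1 := fun x hx ↦
    calc ENNReal.ofReal ((c - x) ^ p) ≤ ENNReal.ofReal ((c - x) ^ (-(3 / 2) : ℝ) + 1) :=
          ENNReal.ofReal_le_ofReal (Real.rpow_le_rpow_add_one (by linarith [hx.2]) hp hp₀)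
      _ ≤ _ := by simpa using ENNReal.ofReal_add_le (p := (c - x) ^ (-(3 / 2) : ℝ)) (q := 1)
  have hsing : ∫⁻ x in Ioc a b, ENNReal.ofReal ((c - x) ^ (-(3 / 2) : ℝ)) ≤
      2 * ENNReal.ofReal ((c - b) ^ (-(1 / 2) : ℝ)) := by
    rw [setLIntegral_Ioc_rpow_sub_left hab hbc.le (Or.inr ⟨by norm_num, hbc⟩),
      show (-(3 / 2) : ℝ) + 1 = -(1 / 2) by norm_num, ← ENNReal.ofReal_ofNat 2,
      ← ENNReal.ofReal_mul zero_le_two]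
    refine ENNReal.ofReal_le_ofReal ?_
    linarith [Real.rpow_nonneg (by linarith : 0 ≤ c - a) (-(1 / 2) : ℝ)]
  calc ∫⁻ x in Ioc a b, ENNReal.ofReal ((c - x) ^ p)
      ≤ ∫⁻ x in Ioc a b, (ENNReal.ofReal ((c - x) ^ (-(3 / 2) : ℝ)) + 1) :=
        setLIntegral_mono' measurableSet_Ioc hpow
    _ = (∫⁻ x in Ioc a b, ENNReal.ofReal ((c - x) ^ (-(3 / 2) : ℝ))) +
          ENNReal.ofReal (b - a) := by
        rw [lintegral_add_right _ measurable_const, setLIntegral_one, Real.volume_Ioc]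
    _ ≤ singularBound T (c - b) := by
        unfold singularBound
        gcongr

theorem setLIntegral_Ioc_singularBound_le {g : ℝ → ℝ} {a b T : ℝ} (hbaT : b - a ≤ T)
    (hg : ∫⁻ x in Ioc a b, ENNReal.ofReal (g x ^ (-(1 / 2) : ℝ)) ≤
      2 * ENNReal.ofReal (T ^ (1 / 2 : ℝ))) :
    ∫⁻ x in Ioc a b, singularBound T (g x) ≤
      singularBoundMass T := by
  unfold singularBound singularBoundMass
  rw [lintegral_add_right _ measurable_const, lintegral_const_mul' _ _ (by norm_num),
    setLIntegral_const, Real.volume_Ioc]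
  calc 2 * (∫⁻ x in Ioc a b, ENNReal.ofReal (g x ^ (-(1 / 2) : ℝ))) +
        ENNReal.ofReal T * ENNReal.ofReal (b - a)
      ≤ 2 * (2 * ENNReal.ofReal (T ^ (1 / 2 : ℝ))) + ENNReal.ofReal T * ENNReal.ofReal T := by
        gcongr
    _ = 4 * ENNReal.ofReal (T ^ (1 / 2 : ℝ)) + ENNReal.ofReal T * ENNReal.ofReal T := by
        rw [← mul_assoc]; norm_num

theorem ofReal_rpow_half_div_half_le {x T : ℝ} (hx : 0 ≤ x) (hxT : x ≤ T) :
    ENNReal.ofReal (x ^ ((-(1 / 2) : ℝ) + 1) / ((-(1 / 2) : ℝ) + 1)) ≤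
      2 * ENNReal.ofReal (T ^ (1 / 2 : ℝ)) := by
  rw [show (-(1 / 2) : ℝ) + 1 = 1 / 2 by norm_num, ← ENNReal.ofReal_ofNat 2,
    ← ENNReal.ofReal_mul zero_le_two]
  exact ENNReal.ofReal_le_ofReal
    (by linarith [Real.rpow_le_rpow hx hxT (by norm_num : (0 : ℝ) ≤ 1 / 2)])

theorem setLIntegral_Ioc_singularBound_sub_left_le {a b T : ℝ} (hab : a ≤ b) (hbaT : b - a ≤ T) :
    ∫⁻ x in Ioc a b, singularBound T (b - x) ≤ singularBoundMass T := by
  refine setLIntegral_Ioc_singularBound_le hbaT ?_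
  rw [setLIntegral_Ioc_rpow_sub_left hab le_rfl (Or.inl (by norm_num)), sub_self,
    Real.zero_rpow (by norm_num), sub_zero]
  exact ofReal_rpow_half_div_half_le (by linarith) hbaT

theorem setLIntegral_Ioc_singularBound_sub_right_le {a b T : ℝ} (hab : a ≤ b) (hbaT : b - a ≤ T) :
    ∫⁻ x in Ioc a b, singularBound T (x - a) ≤ singularBoundMass T := by
  refine setLIntegral_Ioc_singularBound_le hbaT ?_
  rw [setLIntegral_Ioc_rpow_sub_right hab (by norm_num)]
  exact ofReal_rpow_half_div_half_le (by linarith) hbaT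

theorem lintegral_singular_product_le {p T t₁ t₂ s₃ : ℝ} (hp : -(3 / 2) ≤ p) (hp₀ : p ≤ 0)
    (ht₁ : 0 < t₁) (ht₁₂ : t₁ < t₂) (ht₂s₃ : t₂ < s₃) (ht₂T : t₂ ≤ T) :
    ∫⁻ s₂ in Ioc t₁ t₂, ∫⁻ s₁ in Ioc (0 : ℝ) t₁,
        ENNReal.ofReal ((t₂ - s₁) ^ p * (s₃ - s₂) ^ p) ≤
      singularBound T (t₂ - t₁) * singularBound T (s₃ - t₂) := by
  have hsplit : ∀ s₂ ∈ Ioc t₁ t₂, ∫⁻ s₁ in Ioc (0 : ℝ) t₁,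
      ENNReal.ofReal ((t₂ - s₁) ^ p * (s₃ - s₂) ^ p) =
        (∫⁻ s₁ in Ioc (0 : ℝ) t₁, ENNReal.ofReal ((t₂ - s₁) ^ p)) *
          ENNReal.ofReal ((s₃ - s₂) ^ p) := fun s₂ _ ↦ by
    rw [← lintegral_mul_const' _ _ ENNReal.ofReal_ne_top]
    refine setLIntegral_congr_fun measurableSet_Ioc fun s₁ hs₁ ↦ ?_
    exact ENNReal.ofReal_mul (Real.rpow_nonneg (by linarith [hs₁.2]) p)
  rw [setLIntegral_congr_fun measurableSet_Ioc hsplit, lintegral_const_mul _ (by fun_prop)]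
  gcongr
  · exact setLIntegral_Ioc_rpow_sub_left_le_singularBound ht₁.le ht₁₂ (by linarith) hp hp₀
  · exact setLIntegral_Ioc_rpow_sub_left_le_singularBound ht₁₂.le ht₂s₃ (by linarith) hp hp₀

theorem lintegral_singular_product_Ioc_le {p T t₁ t₂ t₃ : ℝ} (hp : -(3 / 2) ≤ p) (hp₀ : p ≤ 0)
    (ht₁ : 0 < t₁) (ht₁₂ : t₁ < t₂) (ht₂₃ : t₂ ≤ t₃) (ht₃T : t₃ ≤ T) :
    ∫⁻ s₃ in Ioc t₂ t₃, ∫⁻ s₂ in Ioc t₁ t₂, ∫⁻ s₁ in Ioc (0 : ℝ) t₁,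
        ENNReal.ofReal ((t₂ - s₁) ^ p * (s₃ - s₂) ^ p) ≤
      singularBound T (t₂ - t₁) * singularBoundMass T :=
  calc _ ≤ ∫⁻ s₃ in Ioc t₂ t₃, singularBound T (t₂ - t₁) * singularBound T (s₃ - t₂) :=
        setLIntegral_mono' measurableSet_Ioc fun s₃ hs₃ ↦
          lintegral_singular_product_le hp hp₀ ht₁ ht₁₂ hs₃.1 (by linarith)
    _ = singularBound T (t₂ - t₁) * ∫⁻ s₃ in Ioc t₂ t₃, singularBound T (s₃ - t₂) :=
        lintegral_const_mul' _ _ (singularBound_ne_top _ _)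
    _ ≤ _ := by
        gcongr
        exact setLIntegral_Ioc_singularBound_sub_right_le ht₂₃ (by linarith)

theorem lintegral_singular_product_Ioc_Ioc_le {p T t₂ t₃ : ℝ} (hp : -(3 / 2) ≤ p) (hp₀ : p ≤ 0)
    (ht₂ : 0 < t₂) (ht₂₃ : t₂ ≤ t₃) (ht₃T : t₃ ≤ T) :
    ∫⁻ t₁ in Ioc (0 : ℝ) t₂, ∫⁻ s₃ in Ioc t₂ t₃, ∫⁻ s₂ in Ioc t₁ t₂, ∫⁻ s₁ in Ioc (0 : ℝ) t₁,
        ENNReal.ofReal ((t₂ - s₁) ^ p * (s₃ - s₂) ^ p) ≤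
      singularBoundMass T * singularBoundMass T := by
  -- the bound on the inner integrals needs `t₁ < t₂`, so drop the null endpoint `t₁ = t₂`
  rw [← Measure.restrict_congr_set Ioo_ae_eq_Ioc]
  calc _ ≤ ∫⁻ t₁ in Ioo (0 : ℝ) t₂, singularBound T (t₂ - t₁) * singularBoundMass T :=
        setLIntegral_mono' measurableSet_Ioo fun t₁ ht₁ ↦
          lintegral_singular_product_Ioc_le hp hp₀ ht₁.1 ht₁.2 ht₂₃ ht₃T
    _ = (∫⁻ t₁ in Ioo (0 : ℝ) t₂, singularBound T (t₂ - t₁)) * singularBoundMass T :=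
        lintegral_mul_const' _ _ (singularBoundMass_ne_top T)
    _ ≤ _ := by
        rw [Measure.restrict_congr_set Ioo_ae_eq_Ioc]
        gcongr
        exact setLIntegral_Ioc_singularBound_sub_left_le ht₂.le (by linarith)

theorem iterated_singular_integral_finite_III_general (d : ℕ) (hd3 : d ≤ 3) (T : ℝ) :
    (∫⁻ t₃ in Set.Ioc (0 : ℝ) T, ∫⁻ t₂ in Set.Ioc (0 : ℝ) t₃, ∫⁻ t₁ in Set.Ioc (0 : ℝ) t₂,
      ∫⁻ s₃ in Set.Ioc t₂ t₃, ∫⁻ s₂ in Set.Ioc t₁ t₂, ∫⁻ s₁ in Set.Ioc (0 : ℝ) t₁,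
        ENNReal.ofReal ((t₂ - s₁) ^ (-(d : ℝ) / 2) * (s₃ - s₂) ^ (-(d : ℝ) / 2))) < ⊤ := by
  have hd : (d : ℝ) ≤ 3 := by exact_mod_cast hd3
  have hp : -(3 / 2) ≤ -(d : ℝ) / 2 := by linarith
  have hp₀ : -(d : ℝ) / 2 ≤ 0 := by linarith [d.cast_nonneg (α := ℝ)]
  have hinner : ∀ t₃ ∈ Ioc 0 T, ∫⁻ t₂ in Ioc (0 : ℝ) t₃, ∫⁻ t₁ in Ioc (0 : ℝ) t₂,
      ∫⁻ s₃ in Ioc t₂ t₃, ∫⁻ s₂ in Ioc t₁ t₂, ∫⁻ s₁ in Ioc (0 : ℝ) t₁,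
        ENNReal.ofReal ((t₂ - s₁) ^ (-(d : ℝ) / 2) * (s₃ - s₂) ^ (-(d : ℝ) / 2)) ≤
      singularBoundMass T * singularBoundMass T * ENNReal.ofReal T := fun t₃ ht₃ ↦
    (setLIntegral_Ioc_le_mul fun t₂ ht₂ ↦
      lintegral_singular_product_Ioc_Ioc_le hp hp₀ ht₂.1 ht₂.2 ht₃.2).trans
        (by gcongr; linarith [ht₃.2])
  have hM := singularBoundMass_ne_top T
  exact (setLIntegral_Ioc_le_mul hinner).trans_lt (by finiteness)

/-- For `d ∈ {1,2,3}` and `T > 0`, the iterated Lebesgue integral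
`∫₀^T dt₃ ∫₀^{t₃} dt₂ ∫₀^{t₂} dt₁ ∫_{t₂}^{t₃} ds₃ ∫_{t₁}^{t₂} ds₂ ∫₀^{t₁} ds₁
  (t₂-s₁)^{-d/2} (s₃-s₂)^{-d/2}` is finite. -/
theorem iterated_singular_integral_finite_III (d : ℕ) (hd1 : 1 ≤ d) (hd3 : d ≤ 3)
    (T : ℝ) (hT : 0 < T) :
    (∫⁻ t₃ in Set.Ioc (0 : ℝ) T, ∫⁻ t₂ in Set.Ioc (0 : ℝ) t₃, ∫⁻ t₁ in Set.Ioc (0 : ℝ) t₂,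
      ∫⁻ s₃ in Set.Ioc t₂ t₃, ∫⁻ s₂ in Set.Ioc t₁ t₂, ∫⁻ s₁ in Set.Ioc (0 : ℝ) t₁,
        ENNReal.ofReal ((t₂ - s₁) ^ (-(d : ℝ) / 2) * (s₃ - s₂) ^ (-(d : ℝ) / 2))) < ⊤ :=
  iterated_singular_integral_finite_III_general d hd3 T
end

section
/- Let d ∈ {1,2,3} and T > 0. Then the iterated integral ∫₀^T dt₃ ∫₀^{t₃} dt₂ ∫₀^{t₂} dt₁ ∫_{t₁}^{t₂} ds₃ ∫_{t₁}^{s₃} ds₂ ∫₀^{t₁} ds₁ (t₃ − s₁)^{−d/2} [ (t₃ − s₂)^{−d/2} + (t₃ − s₃)^{−d/2} ] is finite. -/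
/-!
On the domain every difference `t₃ - sᵢ` lies in `(0, T]`, where
`x ^ (-d/2) ≤ T ^ ((3 - d)/2) * x ^ (-3/2)`, so it suffices to treat the most singular exponent
`3/2`. That case is integrated from the inside out with `∫_a^b (c - s)^(-3/2) ds ≤ 2 (c - b)^(-1/2)`
and `∫_a^b (c - s)^(-1/2) ds ≤ 2 √T`: the factor `(t₃ - s₁)^(-3/2)` turns into `(t₃ - t₁)^(-1/2)`,
`(t₃ - s₂)^(-3/2)` into `(t₃ - s₃)^(-1/2)` and `(t₃ - s₃)^(-3/2)` into `(t₃ - t₂)^(-1/2)`, and each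
of these square-root singularities is integrable in the next variable.
-/

open MeasureTheory Set
open scoped ENNReal

lemma setLIntegral_Ioc_rpow_sub {a b c r : ℝ} (hab : a ≤ b) (hbc : b ≤ c)
    (hr : -1 < r ∨ r ≠ -1 ∧ b < c) :
    ∫⁻ s in Ioc a b, ENNReal.ofReal ((c - s) ^ r) =
      ENNReal.ofReal (((c - a) ^ (r + 1) - (c - b) ^ (r + 1)) / (r + 1)) := by
  have hr' : -1 < r ∨ r ≠ -1 ∧ (0 : ℝ) ∉ uIcc (c - b) (c - a) := by
    refine hr.imp_right fun h => ⟨h.1, ?_⟩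
    rw [uIcc_of_le (by linarith)]
    exact fun h0 => by linarith [h0.1, h.2]
  have hint : IntervalIntegrable (fun s : ℝ => s ^ r) volume (c - b) (c - a) := by
    rcases hr' with hr' | hr'
    · exact intervalIntegral.intervalIntegrable_rpow' hr'
    · exact intervalIntegral.intervalIntegrable_rpow (Or.inr hr'.2)
  have hint' : IntegrableOn (fun s : ℝ => (c - s) ^ r) (Ioc a b) := by
    rw [← intervalIntegrable_iff_integrableOn_Ioc_of_le hab]
    simpa using (hint.comp_sub_left c).symm
  rw [← ofReal_integral_eq_lintegral_ofReal hint' ?nonneg, ← intervalIntegral.integral_of_le hab,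
    intervalIntegral.integral_comp_sub_left (fun s : ℝ => s ^ r) c, integral_rpow hr']
  filter_upwards [ae_restrict_mem measurableSet_Ioc] with s hs
  exact Real.rpow_nonneg (by linarith [hs.2]) r

lemma setLIntegral_Ioc_rpow_sub_neg_three_halves_le {a b c : ℝ} (hab : a ≤ b) (hbc : b < c) :
    ∫⁻ s in Ioc a b, ENNReal.ofReal ((c - s) ^ (-(3 / 2) : ℝ)) ≤
      2 * ENNReal.ofReal ((c - b) ^ (-(1 / 2) : ℝ)) := by
  rw [setLIntegral_Ioc_rpow_sub hab hbc.le (Or.inr ⟨by norm_num, hbc⟩), ← ENNReal.ofReal_ofNat 2,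
    ← ENNReal.ofReal_mul zero_le_two]
  refine ENNReal.ofReal_le_ofReal ?_
  have := Real.rpow_nonneg (show 0 ≤ c - a by linarith) (-(1 / 2))
  norm_num
  linarith

lemma setLIntegral_Ioc_rpow_sub_neg_half_le {a b c T : ℝ} (hab : a ≤ b) (hbc : b ≤ c)
    (hcT : c - a ≤ T) :
    ∫⁻ s in Ioc a b, ENNReal.ofReal ((c - s) ^ (-(1 / 2) : ℝ)) ≤ 2 * ENNReal.ofReal √T := by
  rw [setLIntegral_Ioc_rpow_sub hab hbc (Or.inl (by norm_num)), ← ENNReal.ofReal_ofNat 2,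
    ← ENNReal.ofReal_mul zero_le_two]
  refine ENNReal.ofReal_le_ofReal ?_
  have h1 := Real.rpow_nonneg (show 0 ≤ c - b by linarith) (1 / 2)
  have h2 : √(c - a) ≤ √T := Real.sqrt_le_sqrt hcT
  rw [Real.sqrt_eq_rpow] at h2
  norm_num
  linarith

lemma rpow_neg_le_mul_rpow_neg {x T p q : ℝ} (hx : 0 < x) (hxT : x ≤ T) (hpq : p ≤ q) :
    x ^ (-p) ≤ T ^ (q - p) * x ^ (-q) :=
  calc x ^ (-p) = x ^ (q - p) * x ^ (-q) := by rw [← Real.rpow_add hx]; ring_nf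
    _ ≤ T ^ (q - p) * x ^ (-q) := by gcongr

noncomputable def nestedIntegral (f : ℝ → ℝ → ℝ → ℝ → ℝ≥0∞) (T : ℝ) : ℝ≥0∞ :=
  ∫⁻ t₃ in Ioc 0 T, ∫⁻ t₂ in Ioc 0 t₃, ∫⁻ t₁ in Ioc 0 t₂,
    ∫⁻ s₃ in Ioc t₁ t₂, ∫⁻ s₂ in Ioc t₁ s₃, ∫⁻ s₁ in Ioc 0 t₁, f t₃ s₁ s₂ s₃

lemma nestedIntegral_mono {f g : ℝ → ℝ → ℝ → ℝ → ℝ≥0∞} {T : ℝ}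
    (hfg : ∀ t₃ ≤ T, ∀ s₁ s₂ s₃, 0 < s₁ → s₁ < s₂ → s₂ ≤ s₃ → s₃ < t₃ →
      f t₃ s₁ s₂ s₃ ≤ g t₃ s₁ s₂ s₃) :
    nestedIntegral f T ≤ nestedIntegral g T := by
  refine setLIntegral_mono' measurableSet_Ioc fun t₃ ht₃ => ?_
  rw [setLIntegral_congr Ioo_ae_eq_Ioc.symm, setLIntegral_congr Ioo_ae_eq_Ioc.symm]
  refine setLIntegral_mono' measurableSet_Ioo fun t₂ ht₂ => ?_
  refine setLIntegral_mono' measurableSet_Ioc fun t₁ ht₁ => ?_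
  refine setLIntegral_mono' measurableSet_Ioc fun s₃ hs₃ => ?_
  refine setLIntegral_mono' measurableSet_Ioc fun s₂ hs₂ => ?_
  refine setLIntegral_mono' measurableSet_Ioc fun s₁ hs₁ => ?_
  exact hfg t₃ ht₃.2 s₁ s₂ s₃ hs₁.1 (hs₁.2.trans_lt hs₂.1) hs₂.2 (hs₃.2.trans_lt ht₂.2)

lemma nestedIntegral_const_mul {C : ℝ≥0∞} (hC : C ≠ ∞) (f : ℝ → ℝ → ℝ → ℝ → ℝ≥0∞) (T : ℝ) :
    nestedIntegral (fun t₃ s₁ s₂ s₃ => C * f t₃ s₁ s₂ s₃) T = C * nestedIntegral f T := by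
  simp only [nestedIntegral, lintegral_const_mul' C _ hC]

noncomputable def integrandThreeHalves (c s₁ s₂ s₃ : ℝ) : ℝ≥0∞ :=
  ENNReal.ofReal ((c - s₁) ^ (-(3 / 2) : ℝ)) *
    (ENNReal.ofReal ((c - s₂) ^ (-(3 / 2) : ℝ)) + ENNReal.ofReal ((c - s₃) ^ (-(3 / 2) : ℝ)))

lemma ofReal_rpow_integrand_le_integrandThreeHalves {p T c s₁ s₂ s₃ : ℝ} (hp : p ≤ 3 / 2)
    (hs₁ : 0 < s₁) (h₁₂ : s₁ < s₂) (h₂₃ : s₂ ≤ s₃) (hs₃ : s₃ < c) (hcT : c ≤ T) :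
    ENNReal.ofReal ((c - s₁) ^ (-p) * ((c - s₂) ^ (-p) + (c - s₃) ^ (-p))) ≤
      ENNReal.ofReal (T ^ (3 - 2 * p)) * integrandThreeHalves c s₁ s₂ s₃ := by
  have hT : 0 < T := by linarith
  have key {s : ℝ} (hs : 0 < s) (hsc : s < c) :
      (c - s) ^ (-p) ≤ T ^ (3 / 2 - p) * (c - s) ^ (-(3 / 2) : ℝ) :=
    rpow_neg_le_mul_rpow_neg (by linarith) (by linarith) hp
  have hT2 : T ^ (3 - 2 * p) = T ^ (3 / 2 - p) * T ^ (3 / 2 - p) := by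
    rw [← Real.rpow_add hT]; ring_nf
  have hnn {s : ℝ} (hsc : s < c) : 0 ≤ (c - s) ^ (-(3 / 2) : ℝ) :=
    Real.rpow_nonneg (by linarith) _
  unfold integrandThreeHalves
  rw [← ENNReal.ofReal_add (hnn (by linarith)) (hnn hs₃), ← ENNReal.ofReal_mul (hnn (by linarith)),
    ← ENNReal.ofReal_mul (by positivity), hT2]
  refine ENNReal.ofReal_le_ofReal ?_
  have hnn' {s : ℝ} (hsc : s < c) : 0 ≤ (c - s) ^ (-p) := Real.rpow_nonneg (by linarith) _
  calc _ ≤ (T ^ (3 / 2 - p) * (c - s₁) ^ (-(3 / 2) : ℝ)) *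
        (T ^ (3 / 2 - p) * (c - s₂) ^ (-(3 / 2) : ℝ) +
          T ^ (3 / 2 - p) * (c - s₃) ^ (-(3 / 2) : ℝ)) :=
        mul_le_mul (key hs₁ (by linarith))
          (add_le_add (key (by linarith) (by linarith)) (key (by linarith) hs₃))
          (add_nonneg (hnn' (by linarith)) (hnn' hs₃))
          (mul_nonneg (Real.rpow_nonneg hT.le _) (hnn (by linarith)))
    _ = _ := by ring

section
variable {T c t₁ t₂ s₃ : ℝ}

lemma lintegral_integrandThreeHalves_s₂_s₁_le (ht₁ : 0 ≤ t₁) (h₁₃ : t₁ ≤ s₃) (hs₃ : s₃ < c)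
    (hcT : c ≤ T) :
    ∫⁻ s₂ in Ioc t₁ s₃, ∫⁻ s₁ in Ioc 0 t₁, integrandThreeHalves c s₁ s₂ s₃ ≤
      2 * ENNReal.ofReal ((c - t₁) ^ (-(1 / 2) : ℝ)) *
        (2 * ENNReal.ofReal ((c - s₃) ^ (-(1 / 2) : ℝ)) +
          ENNReal.ofReal ((c - s₃) ^ (-(3 / 2) : ℝ)) * ENNReal.ofReal T) := by
  calc _ ≤ ∫⁻ s₂ in Ioc t₁ s₃, 2 * ENNReal.ofReal ((c - t₁) ^ (-(1 / 2) : ℝ)) *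
          (ENNReal.ofReal ((c - s₂) ^ (-(3 / 2) : ℝ)) +
            ENNReal.ofReal ((c - s₃) ^ (-(3 / 2) : ℝ))) := by
        refine setLIntegral_mono' measurableSet_Ioc fun s₂ _ => ?_
        simp only [integrandThreeHalves]
        rw [lintegral_mul_const _ (by fun_prop)]
        gcongr
        exact setLIntegral_Ioc_rpow_sub_neg_three_halves_le ht₁ (by linarith)
    _ = 2 * ENNReal.ofReal ((c - t₁) ^ (-(1 / 2) : ℝ)) *
          ((∫⁻ s₂ in Ioc t₁ s₃, ENNReal.ofReal ((c - s₂) ^ (-(3 / 2) : ℝ))) +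
            ENNReal.ofReal ((c - s₃) ^ (-(3 / 2) : ℝ)) * ENNReal.ofReal (s₃ - t₁)) := by
        rw [lintegral_const_mul _ (by fun_prop), lintegral_add_left (by fun_prop),
          setLIntegral_const, Real.volume_Ioc]
    _ ≤ _ := by
        gcongr
        · exact setLIntegral_Ioc_rpow_sub_neg_three_halves_le h₁₃ hs₃
        · linarith

lemma lintegral_integrandThreeHalves_s₃_s₂_s₁_le (ht₁ : 0 ≤ t₁) (h₁₂ : t₁ ≤ t₂) (h₂c : t₂ < c)
    (hcT : c ≤ T) :
    ∫⁻ s₃ in Ioc t₁ t₂, ∫⁻ s₂ in Ioc t₁ s₃, ∫⁻ s₁ in Ioc 0 t₁, integrandThreeHalves c s₁ s₂ s₃ ≤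
      2 * ENNReal.ofReal ((c - t₁) ^ (-(1 / 2) : ℝ)) *
        (2 * (2 * ENNReal.ofReal √T) +
          2 * ENNReal.ofReal ((c - t₂) ^ (-(1 / 2) : ℝ)) * ENNReal.ofReal T) := by
  calc _ ≤ ∫⁻ s₃ in Ioc t₁ t₂, 2 * ENNReal.ofReal ((c - t₁) ^ (-(1 / 2) : ℝ)) *
          (2 * ENNReal.ofReal ((c - s₃) ^ (-(1 / 2) : ℝ)) +
            ENNReal.ofReal ((c - s₃) ^ (-(3 / 2) : ℝ)) * ENNReal.ofReal T) :=
        setLIntegral_mono' measurableSet_Ioc fun s₃ hs₃ =>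
          lintegral_integrandThreeHalves_s₂_s₁_le ht₁ hs₃.1.le (hs₃.2.trans_lt h₂c) hcT
    _ = 2 * ENNReal.ofReal ((c - t₁) ^ (-(1 / 2) : ℝ)) *
          (2 * (∫⁻ s₃ in Ioc t₁ t₂, ENNReal.ofReal ((c - s₃) ^ (-(1 / 2) : ℝ))) +
            (∫⁻ s₃ in Ioc t₁ t₂, ENNReal.ofReal ((c - s₃) ^ (-(3 / 2) : ℝ))) *
              ENNReal.ofReal T) := by
        rw [lintegral_const_mul _ (by fun_prop), lintegral_add_left (by fun_prop),
          lintegral_const_mul _ (by fun_prop), lintegral_mul_const _ (by fun_prop)]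
    _ ≤ _ := by
        gcongr
        · exact setLIntegral_Ioc_rpow_sub_neg_half_le h₁₂ h₂c.le (by linarith)
        · exact setLIntegral_Ioc_rpow_sub_neg_three_halves_le h₁₂ h₂c

lemma lintegral_integrandThreeHalves_t₁_le (ht₂ : 0 ≤ t₂) (h₂c : t₂ < c) (hcT : c ≤ T) :
    ∫⁻ t₁ in Ioc 0 t₂, ∫⁻ s₃ in Ioc t₁ t₂, ∫⁻ s₂ in Ioc t₁ s₃, ∫⁻ s₁ in Ioc 0 t₁,
        integrandThreeHalves c s₁ s₂ s₃ ≤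
      2 * (2 * ENNReal.ofReal √T) *
        (2 * (2 * ENNReal.ofReal √T) +
          2 * ENNReal.ofReal ((c - t₂) ^ (-(1 / 2) : ℝ)) * ENNReal.ofReal T) := by
  calc _ ≤ ∫⁻ t₁ in Ioc 0 t₂, 2 * ENNReal.ofReal ((c - t₁) ^ (-(1 / 2) : ℝ)) *
          (2 * (2 * ENNReal.ofReal √T) +
            2 * ENNReal.ofReal ((c - t₂) ^ (-(1 / 2) : ℝ)) * ENNReal.ofReal T) :=
        setLIntegral_mono' measurableSet_Ioc fun t₁ ht₁ =>
          lintegral_integrandThreeHalves_s₃_s₂_s₁_le ht₁.1.le ht₁.2 h₂c hcT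
    _ = 2 * (∫⁻ t₁ in Ioc 0 t₂, ENNReal.ofReal ((c - t₁) ^ (-(1 / 2) : ℝ))) *
          (2 * (2 * ENNReal.ofReal √T) +
            2 * ENNReal.ofReal ((c - t₂) ^ (-(1 / 2) : ℝ)) * ENNReal.ofReal T) := by
        rw [lintegral_mul_const _ (by fun_prop), lintegral_const_mul _ (by fun_prop)]
    _ ≤ _ := by
        gcongr
        exact setLIntegral_Ioc_rpow_sub_neg_half_le ht₂ h₂c.le (by linarith)

end

lemma nestedIntegral_integrandThreeHalves_lt_top (T : ℝ) :
    nestedIntegral integrandThreeHalves T < ∞ := by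
  set S := 2 * ENNReal.ofReal √T
  have h_t₂ (c : ℝ) (hc : c ∈ Ioc 0 T) :
      ∫⁻ t₂ in Ioc 0 c, ∫⁻ t₁ in Ioc 0 t₂, ∫⁻ s₃ in Ioc t₁ t₂, ∫⁻ s₂ in Ioc t₁ s₃,
        ∫⁻ s₁ in Ioc 0 t₁, integrandThreeHalves c s₁ s₂ s₃ ≤
      2 * S * (2 * S * ENNReal.ofReal T + 2 * S * ENNReal.ofReal T) := by
    calc _ = ∫⁻ t₂ in Ioo 0 c, ∫⁻ t₁ in Ioc 0 t₂, ∫⁻ s₃ in Ioc t₁ t₂, ∫⁻ s₂ in Ioc t₁ s₃,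
          ∫⁻ s₁ in Ioc 0 t₁, integrandThreeHalves c s₁ s₂ s₃ :=
            setLIntegral_congr Ioo_ae_eq_Ioc.symm
      _ ≤ ∫⁻ t₂ in Ioo 0 c, 2 * S *
            (2 * S + 2 * ENNReal.ofReal ((c - t₂) ^ (-(1 / 2) : ℝ)) * ENNReal.ofReal T) :=
          setLIntegral_mono' measurableSet_Ioo fun t₂ ht₂ =>
            lintegral_integrandThreeHalves_t₁_le ht₂.1.le ht₂.2 hc.2
      _ = 2 * S * (2 * S * ENNReal.ofReal c +
            2 * (∫⁻ t₂ in Ioc 0 c, ENNReal.ofReal ((c - t₂) ^ (-(1 / 2) : ℝ))) *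
              ENNReal.ofReal T) := by
          rw [setLIntegral_congr Ioo_ae_eq_Ioc, lintegral_const_mul _ (by fun_prop),
            lintegral_add_left measurable_const, setLIntegral_const, Real.volume_Ioc, sub_zero,
            lintegral_mul_const _ (by fun_prop), lintegral_const_mul _ (by fun_prop)]
      _ ≤ _ := by
          gcongr
          · exact hc.2
          · exact setLIntegral_Ioc_rpow_sub_neg_half_le hc.1.le le_rfl (by linarith [hc.2])
  calc nestedIntegral integrandThreeHalves T
      ≤ ∫⁻ _ in Ioc 0 T, 2 * S * (2 * S * ENNReal.ofReal T + 2 * S * ENNReal.ofReal T) :=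
        setLIntegral_mono' measurableSet_Ioc h_t₂
    _ < ∞ := by
        rw [setLIntegral_const, Real.volume_Ioc]
        finiteness

theorem iterated_singular_integral_finite_IV_general (d : ℕ) (hd3 : d ≤ 3)
    (T : ℝ) :
    (∫⁻ t₃ in Set.Ioc (0 : ℝ) T, ∫⁻ t₂ in Set.Ioc (0 : ℝ) t₃, ∫⁻ t₁ in Set.Ioc (0 : ℝ) t₂,
      ∫⁻ s₃ in Set.Ioc t₁ t₂, ∫⁻ s₂ in Set.Ioc t₁ s₃, ∫⁻ s₁ in Set.Ioc (0 : ℝ) t₁,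
        ENNReal.ofReal ((t₃ - s₁) ^ (-(d : ℝ) / 2) *
          ((t₃ - s₂) ^ (-(d : ℝ) / 2) + (t₃ - s₃) ^ (-(d : ℝ) / 2)))) < ⊤ := by
  have hd : (d : ℝ) / 2 ≤ 3 / 2 := by
    have : (d : ℝ) ≤ 3 := by exact_mod_cast hd3
    linarith
  have hle := nestedIntegral_mono (T := T)
    (f := fun c s₁ s₂ s₃ => ENNReal.ofReal ((c - s₁) ^ (-(d : ℝ) / 2) *
      ((c - s₂) ^ (-(d : ℝ) / 2) + (c - s₃) ^ (-(d : ℝ) / 2))))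
    fun c hc s₁ s₂ s₃ h₁ h₁₂ h₂₃ h₃ => by
      simpa only [neg_div] using ofReal_rpow_integrand_le_integrandThreeHalves hd h₁ h₁₂ h₂₃ h₃ hc
  rw [nestedIntegral_const_mul ENNReal.ofReal_ne_top] at hle
  exact hle.trans_lt (ENNReal.mul_lt_top ENNReal.ofReal_lt_top
    (nestedIntegral_integrandThreeHalves_lt_top T))

/-- For `d ∈ {1,2,3}` and `T > 0`, the iterated Lebesgue integral
`∫₀^T dt₃ ∫₀^{t₃} dt₂ ∫₀^{t₂} dt₁ ∫_{t₁}^{t₂} ds₃ ∫_{t₁}^{s₃} ds₂ ∫₀^{t₁} ds₁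
  (t₃-s₁)^{-d/2} [(t₃-s₂)^{-d/2} + (t₃-s₃)^{-d/2}]` is finite. -/
theorem iterated_singular_integral_finite_IV (d : ℕ) (hd1 : 1 ≤ d) (hd3 : d ≤ 3)
    (T : ℝ) (hT : 0 < T) :
    (∫⁻ t₃ in Set.Ioc (0 : ℝ) T, ∫⁻ t₂ in Set.Ioc (0 : ℝ) t₃, ∫⁻ t₁ in Set.Ioc (0 : ℝ) t₂,
      ∫⁻ s₃ in Set.Ioc t₁ t₂, ∫⁻ s₂ in Set.Ioc t₁ s₃, ∫⁻ s₁ in Set.Ioc (0 : ℝ) t₁,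
        ENNReal.ofReal ((t₃ - s₁) ^ (-(d : ℝ) / 2) *
          ((t₃ - s₂) ^ (-(d : ℝ) / 2) + (t₃ - s₃) ^ (-(d : ℝ) / 2)))) < ⊤ :=
  iterated_singular_integral_finite_IV_general d hd3 T
end

section
/- Let d ∈ {1,2,3} and T > 0. Then for k ∈ {1,2}, the iterated integral ∫₀^T dt₃ ∫₀^{t₃} dt₂ ∫₀^{t₂} dt₁ ∫_{t₁}^{t₂} ds₃ ∫₀^{t₁} ds₂ ∫₀^{s₂} ds₁ (t₃ − s₃)^{−d/2} [ (t₃ − s_k)^{−d/2} + (t₂ − s_k)^{−d/2} ] is finite. -/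
/-!
With `p = d/2 < 2`, the inequality `a b ≤ (a + b)²` gives
`(a + b)^(-p) ≤ a^(-p/2) b^(-p/2)` for `a, b > 0`, which splits each singularity of order `d/2`
(not integrable once `d ≥ 2`) into two of order `d/4 < 1`:
`(t₃ - s₃)^(-p) ≤ (t₃ - t₂)^(-p/2) (t₂ - s₃)^(-p/2)`, `(t₃ - s_k)^(-p) ≤ (t₂ - s_k)^(-p)`, and
`(t₂ - s_k)^(-p)` splits through `s₂` (for `k = 1`) or through `t₁` (for `k = 2`). Integrating
from the inside out, each variable `x` then meets at most one factor `(c - x)^(-d/4)` with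
`x < c ≤ T`, whose integral is at most `T^(1 - d/4) / (1 - d/4)`.
-/

open MeasureTheory Set
open scoped ENNReal

theorem lintegral_Ioc_sub_rpow_neg {q a c : ℝ} (hq : q < 1) (hac : a ≤ c) :
    ∫⁻ x in Ioc a c, ENNReal.ofReal ((c - x) ^ (-q)) =
      ENNReal.ofReal ((c - a) ^ (1 - q) / (1 - q)) := by
  have hint : IntervalIntegrable (fun x : ℝ => (c - x) ^ (-q)) volume a c := by
    simpa using ((intervalIntegral.intervalIntegrable_rpow' (r := -q) (by linarith)).comp_sub_left c
      (a := c - c) (b := c - a)).symm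
  rw [← ofReal_integral_eq_lintegral_ofReal
      ((intervalIntegrable_iff_integrableOn_Ioc_of_le hac).mp hint)
      ((ae_restrict_iff' measurableSet_Ioc).mpr (.of_forall fun x hx =>
        Real.rpow_nonneg (sub_nonneg.mpr hx.2) _)),
    ← intervalIntegral.integral_of_le hac,
    intervalIntegral.integral_comp_sub_left (fun y : ℝ => y ^ (-q)), sub_self,
    integral_rpow (Or.inl (by linarith)), Real.zero_rpow (by linarith), sub_zero, neg_add_eq_sub]

/-- `hF` is only asked on `Ioo a b`: at `x = b = c` the junk value `0 ^ (-q) = 0` would make it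
fail. -/
theorem setLIntegral_Ioc_le_mul_of_le_mul_sub_rpow_neg {q a b c L : ℝ} {C : ℝ≥0∞}
    {F : ℝ → ℝ≥0∞} (hq : q < 1) (hac : a ≤ c) (hbc : b ≤ c) (hL : c - a ≤ L)
    (hF : ∀ x ∈ Ioo a b, F x ≤ C * ENNReal.ofReal ((c - x) ^ (-q))) :
    ∫⁻ x in Ioc a b, F x ≤ C * ENNReal.ofReal (L ^ (1 - q) / (1 - q)) :=
  calc ∫⁻ x in Ioc a b, F x = ∫⁻ x in Ioo a b, F x := (setLIntegral_congr Ioo_ae_eq_Ioc).symm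
    _ ≤ ∫⁻ x in Ioo a b, C * ENNReal.ofReal ((c - x) ^ (-q)) :=
      setLIntegral_mono' measurableSet_Ioo hF
    _ = C * ∫⁻ x in Ioo a b, ENNReal.ofReal ((c - x) ^ (-q)) := lintegral_const_mul C (by fun_prop)
    _ ≤ C * ∫⁻ x in Ioc a c, ENNReal.ofReal ((c - x) ^ (-q)) := by
      gcongr; exact Ioo_subset_Ioc_self.trans (Ioc_subset_Ioc_right hbc)
    _ ≤ C * ENNReal.ofReal (L ^ (1 - q) / (1 - q)) := by
      rw [lintegral_Ioc_sub_rpow_neg hq hac]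
      gcongr

theorem setLIntegral_Ioc_le_mul_of_le {a b L : ℝ} {C : ℝ≥0∞} {F : ℝ → ℝ≥0∞} (hL : b - a ≤ L)
    (hF : ∀ x ∈ Ioc a b, F x ≤ C) : ∫⁻ x in Ioc a b, F x ≤ C * ENNReal.ofReal L :=
  calc ∫⁻ x in Ioc a b, F x ≤ ∫⁻ _ in Ioc a b, C := setLIntegral_mono' measurableSet_Ioc hF
    _ ≤ C * ENNReal.ofReal L := by
      rw [setLIntegral_const, Real.volume_Ioc]; gcongr

theorem sub_rpow_neg_le_mul_sub_rpow_neg_half {a b c p : ℝ} (hab : a < b) (hbc : b < c)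
    (hp : 0 ≤ p) : (c - a) ^ (-p) ≤ (c - b) ^ (-(p / 2)) * (b - a) ^ (-(p / 2)) := by
  have hprod : (c - b) * (b - a) ≤ (c - a) ^ (2 : ℝ) := by
    rw [Real.rpow_two]; nlinarith [sq_nonneg (c - b - (b - a))]
  calc (c - a) ^ (-p) = ((c - a) ^ (2 : ℝ)) ^ (-(p / 2)) := by
        rw [← Real.rpow_mul (by linarith)]; ring_nf
    _ ≤ ((c - b) * (b - a)) ^ (-(p / 2)) :=
        Real.rpow_le_rpow_of_nonpos (by nlinarith) hprod (by linarith)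
    _ = (c - b) ^ (-(p / 2)) * (b - a) ^ (-(p / 2)) := Real.mul_rpow (by linarith) (by linarith)

theorem ofReal_sub_rpow_neg_mul_add_le {p t₃ t₂ s₃ σ : ℝ} (hp : 0 ≤ p) (hs₃ : s₃ < t₂) (hσ : σ < t₂)
    (ht₂ : t₂ < t₃) :
    ENNReal.ofReal ((t₃ - s₃) ^ (-p) * ((t₃ - σ) ^ (-p) + (t₂ - σ) ^ (-p))) ≤
      ENNReal.ofReal (2 * (t₃ - t₂) ^ (-(p / 2))) * ENNReal.ofReal ((t₂ - s₃) ^ (-(p / 2))) *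
        ENNReal.ofReal ((t₂ - σ) ^ (-p)) := by
  have hsplit := sub_rpow_neg_le_mul_sub_rpow_neg_half hs₃ ht₂ hp
  have hmono : (t₃ - σ) ^ (-p) ≤ (t₂ - σ) ^ (-p) :=
    Real.rpow_le_rpow_of_nonpos (by linarith) (by linarith) (by linarith)
  have hbound : (t₃ - s₃) ^ (-p) * ((t₃ - σ) ^ (-p) + (t₂ - σ) ^ (-p))
      ≤ ((t₃ - t₂) ^ (-(p / 2)) * (t₂ - s₃) ^ (-(p / 2))) * (2 * (t₂ - σ) ^ (-p)) := by
    have := Real.rpow_nonneg (sub_nonneg.mpr (hσ.trans ht₂).le) (-p)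
    gcongr; linarith
  rw [← ENNReal.ofReal_mul (by positivity), ← ENNReal.ofReal_mul (by positivity)]
  exact ENNReal.ofReal_le_ofReal (hbound.trans_eq (by ring))

theorem lintegral_Ioc_triple_sub_s₁_rpow_neg_le {p T t₂ : ℝ} (hp0 : 0 ≤ p) (hp2 : p < 2)
    (ht₂ : 0 ≤ t₂) (ht₂T : t₂ ≤ T) :
    ∫⁻ t₁ in Ioc 0 t₂, ∫⁻ s₂ in Ioc 0 t₁, ∫⁻ s₁ in Ioc 0 s₂, ENNReal.ofReal ((t₂ - s₁) ^ (-p)) ≤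
      ENNReal.ofReal (T ^ (1 - p / 2) / (1 - p / 2)) *
        ENNReal.ofReal (T ^ (1 - p / 2) / (1 - p / 2)) * ENNReal.ofReal T := by
  have hp : p / 2 < 1 := by linarith
  refine setLIntegral_Ioc_le_mul_of_le (by linarith) fun t₁ ht₁ => ?_
  refine setLIntegral_Ioc_le_mul_of_le_mul_sub_rpow_neg hp ht₂ ht₁.2 (by linarith)
    fun s₂ hs₂ => ?_
  rw [mul_comm]
  refine setLIntegral_Ioc_le_mul_of_le_mul_sub_rpow_neg hp hs₂.1.le le_rfl
    (by linarith [hs₂.2, ht₁.2]) fun s₁ hs₁ => ?_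
  rw [← ENNReal.ofReal_mul (Real.rpow_nonneg (by linarith [hs₂.2, ht₁.2]) _)]
  exact ENNReal.ofReal_le_ofReal
    (sub_rpow_neg_le_mul_sub_rpow_neg_half hs₁.2 (hs₂.2.trans_le ht₁.2) hp0)

theorem lintegral_Ioc_triple_sub_s₂_rpow_neg_le {p T t₂ : ℝ} (hp0 : 0 ≤ p) (hp2 : p < 2)
    (ht₂ : 0 ≤ t₂) (ht₂T : t₂ ≤ T) :
    ∫⁻ t₁ in Ioc 0 t₂, ∫⁻ s₂ in Ioc 0 t₁, ∫⁻ _ in Ioc 0 s₂, ENNReal.ofReal ((t₂ - s₂) ^ (-p)) ≤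
      ENNReal.ofReal T * ENNReal.ofReal (T ^ (1 - p / 2) / (1 - p / 2)) *
        ENNReal.ofReal (T ^ (1 - p / 2) / (1 - p / 2)) := by
  have hp : p / 2 < 1 := by linarith
  refine setLIntegral_Ioc_le_mul_of_le_mul_sub_rpow_neg hp ht₂ le_rfl (by linarith)
    fun t₁ ht₁ => ?_
  rw [mul_right_comm]
  refine setLIntegral_Ioc_le_mul_of_le_mul_sub_rpow_neg hp ht₁.1.le le_rfl (by linarith [ht₁.2])
    fun s₂ hs₂ => ?_
  refine (setLIntegral_Ioc_le_mul_of_le (by linarith [hs₂.2, ht₁.2]) fun _ _ => le_rfl).trans ?_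
  calc ENNReal.ofReal ((t₂ - s₂) ^ (-p)) * ENNReal.ofReal T
      ≤ ENNReal.ofReal ((t₂ - t₁) ^ (-(p / 2)) * (t₁ - s₂) ^ (-(p / 2))) * ENNReal.ofReal T := by
        gcongr; exact sub_rpow_neg_le_mul_sub_rpow_neg_half hs₂.2 ht₁.2 hp0
    _ = _ := by rw [ENNReal.ofReal_mul (Real.rpow_nonneg (by linarith [ht₁.2]) _)]; ring

/-- `σ s₂ s₁` plays the role of `s_k`. -/
theorem sixfold_lintegral_lt_top_of_threefold_le {p T : ℝ} {C : ℝ≥0∞} (σ : ℝ → ℝ → ℝ) (hp0 : 0 ≤ p)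
    (hp2 : p < 2) (hσ : ∀ s₂ s₁, s₁ ≤ s₂ → σ s₂ s₁ ≤ s₂) (hC : C ≠ ⊤)
    (hJ : ∀ t₂ ∈ Ioc 0 T, ∫⁻ t₁ in Ioc 0 t₂, ∫⁻ s₂ in Ioc 0 t₁, ∫⁻ s₁ in Ioc 0 s₂,
      ENNReal.ofReal ((t₂ - σ s₂ s₁) ^ (-p)) ≤ C) :
    ∫⁻ t₃ in Ioc 0 T, ∫⁻ t₂ in Ioc 0 t₃, ∫⁻ t₁ in Ioc 0 t₂,
      ∫⁻ s₃ in Ioc t₁ t₂, ∫⁻ s₂ in Ioc 0 t₁, ∫⁻ s₁ in Ioc 0 s₂,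
        ENNReal.ofReal ((t₃ - s₃) ^ (-p) *
          ((t₃ - σ s₂ s₁) ^ (-p) + (t₂ - σ s₂ s₁) ^ (-p))) < ⊤ := by
  have hp : p / 2 < 1 := by linarith
  set K := ENNReal.ofReal (T ^ (1 - p / 2) / (1 - p / 2))
  refine lt_of_le_of_lt (b := ENNReal.ofReal 2 * C * K * K * ENNReal.ofReal T) ?_ (by finiteness)
  refine setLIntegral_Ioc_le_mul_of_le (by linarith) fun t₃ ht₃ => ?_
  refine setLIntegral_Ioc_le_mul_of_le_mul_sub_rpow_neg hp ht₃.1.le le_rfl (by linarith [ht₃.2])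
    fun t₂ ht₂ => ?_
  set A := ENNReal.ofReal (2 * (t₃ - t₂) ^ (-(p / 2)))
  have hA : A ≠ ⊤ := ENNReal.ofReal_ne_top
  calc ∫⁻ t₁ in Ioc 0 t₂, ∫⁻ s₃ in Ioc t₁ t₂, ∫⁻ s₂ in Ioc 0 t₁, ∫⁻ s₁ in Ioc 0 s₂,
        ENNReal.ofReal ((t₃ - s₃) ^ (-p) * ((t₃ - σ s₂ s₁) ^ (-p) + (t₂ - σ s₂ s₁) ^ (-p)))
      ≤ ∫⁻ t₁ in Ioc 0 t₂, A * (∫⁻ s₂ in Ioc 0 t₁, ∫⁻ s₁ in Ioc 0 s₂,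
          ENNReal.ofReal ((t₂ - σ s₂ s₁) ^ (-p))) * K := by
        refine setLIntegral_mono' measurableSet_Ioc fun t₁ ht₁ => ?_
        refine setLIntegral_Ioc_le_mul_of_le_mul_sub_rpow_neg hp ht₁.2 le_rfl
          (by linarith [ht₁.1, ht₂.2, ht₃.2]) fun s₃ hs₃ => ?_
        calc ∫⁻ s₂ in Ioc 0 t₁, ∫⁻ s₁ in Ioc 0 s₂, ENNReal.ofReal ((t₃ - s₃) ^ (-p) *
              ((t₃ - σ s₂ s₁) ^ (-p) + (t₂ - σ s₂ s₁) ^ (-p)))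
            ≤ ∫⁻ s₂ in Ioc 0 t₁, ∫⁻ s₁ in Ioc 0 s₂, A * ENNReal.ofReal ((t₂ - s₃) ^ (-(p / 2))) *
                ENNReal.ofReal ((t₂ - σ s₂ s₁) ^ (-p)) :=
              setLIntegral_mono' measurableSet_Ioc fun s₂ hs₂ =>
                setLIntegral_mono' measurableSet_Ioc fun s₁ hs₁ =>
                  ofReal_sub_rpow_neg_mul_add_le hp0 hs₃.2
                    (by linarith [hσ s₂ s₁ hs₁.2, hs₂.2, hs₃.1, hs₃.2]) ht₂.2
          _ = A * (∫⁻ s₂ in Ioc 0 t₁, ∫⁻ s₁ in Ioc 0 s₂, ENNReal.ofReal ((t₂ - σ s₂ s₁) ^ (-p))) *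
                ENNReal.ofReal ((t₂ - s₃) ^ (-(p / 2))) := by
              simp only [lintegral_const_mul' _ _ (ENNReal.mul_ne_top hA ENNReal.ofReal_ne_top)]
              ring
    _ = A * (∫⁻ t₁ in Ioc 0 t₂, ∫⁻ s₂ in Ioc 0 t₁, ∫⁻ s₁ in Ioc 0 s₂,
          ENNReal.ofReal ((t₂ - σ s₂ s₁) ^ (-p))) * K := by
        rw [lintegral_mul_const' _ _ (by finiteness), lintegral_const_mul' _ _ hA]
    _ ≤ A * C * K := by gcongr; exact hJ t₂ ⟨ht₂.1, by linarith [ht₂.2, ht₃.2]⟩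
    _ = ENNReal.ofReal 2 * C * K * ENNReal.ofReal ((t₃ - t₂) ^ (-(p / 2))) := by
        simp only [A, ENNReal.ofReal_mul zero_le_two]; ring

theorem iterated_singular_integral_finite_V_general (d : ℕ) (hd3 : d ≤ 3)
    (T : ℝ) :
    ((∫⁻ t₃ in Set.Ioc (0 : ℝ) T, ∫⁻ t₂ in Set.Ioc (0 : ℝ) t₃, ∫⁻ t₁ in Set.Ioc (0 : ℝ) t₂,
      ∫⁻ s₃ in Set.Ioc t₁ t₂, ∫⁻ s₂ in Set.Ioc (0 : ℝ) t₁, ∫⁻ s₁ in Set.Ioc (0 : ℝ) s₂,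
        ENNReal.ofReal ((t₃ - s₃) ^ (-(d : ℝ) / 2) *
          ((t₃ - s₁) ^ (-(d : ℝ) / 2) + (t₂ - s₁) ^ (-(d : ℝ) / 2)))) < ⊤) ∧
    ((∫⁻ t₃ in Set.Ioc (0 : ℝ) T, ∫⁻ t₂ in Set.Ioc (0 : ℝ) t₃, ∫⁻ t₁ in Set.Ioc (0 : ℝ) t₂,
      ∫⁻ s₃ in Set.Ioc t₁ t₂, ∫⁻ s₂ in Set.Ioc (0 : ℝ) t₁, ∫⁻ s₁ in Set.Ioc (0 : ℝ) s₂,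
        ENNReal.ofReal ((t₃ - s₃) ^ (-(d : ℝ) / 2) *
          ((t₃ - s₂) ^ (-(d : ℝ) / 2) + (t₂ - s₂) ^ (-(d : ℝ) / 2)))) < ⊤) := by
  have hp0 : 0 ≤ (d : ℝ) / 2 := by positivity
  have hp2 : (d : ℝ) / 2 < 2 := by
    have : (d : ℝ) ≤ 3 := by exact_mod_cast hd3
    linarith
  simp only [neg_div]
  exact ⟨sixfold_lintegral_lt_top_of_threefold_le (fun _ s₁ => s₁) hp0 hp2 (fun _ _ h => h)
      (by finiteness) fun _ ht₂ => lintegral_Ioc_triple_sub_s₁_rpow_neg_le hp0 hp2 ht₂.1.le ht₂.2,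
    sixfold_lintegral_lt_top_of_threefold_le (fun s₂ _ => s₂) hp0 hp2 (fun _ _ _ => le_rfl)
      (by finiteness) fun _ ht₂ => lintegral_Ioc_triple_sub_s₂_rpow_neg_le hp0 hp2 ht₂.1.le ht₂.2⟩

/-- For `d ∈ {1,2,3}`, `T > 0` and `k ∈ {1,2}`, the iterated Lebesgue
integral `∫₀^T dt₃ ∫₀^{t₃} dt₂ ∫₀^{t₂} dt₁ ∫_{t₁}^{t₂} ds₃ ∫₀^{t₁} ds₂ ∫₀^{s₂} ds₁
  (t₃-s₃)^{-d/2} [(t₃-s_k)^{-d/2} + (t₂-s_k)^{-d/2}]` is finite, where `s_k = s₁` for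
`k = 1` and `s_k = s₂` for `k = 2`.  We state both cases as a conjunction. -/
theorem iterated_singular_integral_finite_V (d : ℕ) (hd1 : 1 ≤ d) (hd3 : d ≤ 3)
    (T : ℝ) (hT : 0 < T) :
    ((∫⁻ t₃ in Set.Ioc (0 : ℝ) T, ∫⁻ t₂ in Set.Ioc (0 : ℝ) t₃, ∫⁻ t₁ in Set.Ioc (0 : ℝ) t₂,
      ∫⁻ s₃ in Set.Ioc t₁ t₂, ∫⁻ s₂ in Set.Ioc (0 : ℝ) t₁, ∫⁻ s₁ in Set.Ioc (0 : ℝ) s₂,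
        ENNReal.ofReal ((t₃ - s₃) ^ (-(d : ℝ) / 2) *
          ((t₃ - s₁) ^ (-(d : ℝ) / 2) + (t₂ - s₁) ^ (-(d : ℝ) / 2)))) < ⊤) ∧
    ((∫⁻ t₃ in Set.Ioc (0 : ℝ) T, ∫⁻ t₂ in Set.Ioc (0 : ℝ) t₃, ∫⁻ t₁ in Set.Ioc (0 : ℝ) t₂,
      ∫⁻ s₃ in Set.Ioc t₁ t₂, ∫⁻ s₂ in Set.Ioc (0 : ℝ) t₁, ∫⁻ s₁ in Set.Ioc (0 : ℝ) s₂,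
        ENNReal.ofReal ((t₃ - s₃) ^ (-(d : ℝ) / 2) *
          ((t₃ - s₂) ^ (-(d : ℝ) / 2) + (t₂ - s₂) ^ (-(d : ℝ) / 2)))) < ⊤) :=
  iterated_singular_integral_finite_V_general d hd3 T
end
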